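/- arXiv:1108.3693 — 2 statements merged into one kernel-verified Lean document; each statement's English description precedes it below -/
import Mathlib

section
/- Front spinning preserves the Legendrian condition (from the proof of Proposition 1.4): let n ≥ 1, let E be a real normed vector space, and let f : E → ℝ^{2n+1} have differentiable component functions x_1, y_1, …, x_n, y_n, z satisfying the Legendrian condition Dz(p)(v) = Σ_{i=1}^{n} y_i(p)·Dx_i(p)(v) for all p ∈ E and v ∈ E. Then the front-spun map Σf : E × ℝ → ℝ^{2n+3}, with component functions (X_0, Y_0, …, X_n, Y_n, Z), satisfies the Legendrian condition for α_{n+1}: DZ(p,θ)(v,s) = Σ_{i=0}^{n} Y_i(p,θ)·DX_i(p,θ)(v,s) for all (p,θ) ∈ E × ℝ and all (v,s) ∈ E × ℝ. -/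
/-!
Only the first coordinate pair is rotated, and the contact form is invariant under that rotation:
the two new terms `Y₀ dX₀ + Y₁ dX₁` give `y₁ dx₁ (sin² θ + cos² θ) = y₁ dx₁`, while the
`dθ`-contributions `y₁ x₁ sin θ cos θ` and `-y₁ x₁ cos θ sin θ` cancel. The remaining components
and `z` depend on `p` alone, so their derivatives are those of `f`.
-/

/-- The `x`-component functions of the front-spun map. -/
noncomputable def spinX {E : Type*} (x : ℕ → E → ℝ) : ℕ → E × ℝ → ℝ
  | 0 => fun q => x 1 q.1 * Real.sin q.2
  | 1 => fun q => x 1 q.1 * Real.cos q.2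
  | (i + 2) => fun q => x (i + 2) q.1

/-- The `y`-component functions of the front-spun map. -/
noncomputable def spinY {E : Type*} (y : ℕ → E → ℝ) : ℕ → E × ℝ → ℝ
  | 0 => fun q => y 1 q.1 * Real.sin q.2
  | 1 => fun q => y 1 q.1 * Real.cos q.2
  | (i + 2) => fun q => y (i + 2) q.1

/-- The `z`-component function of the front-spun map. -/
def spinZ {E : Type*} (z : E → ℝ) : E × ℝ → ℝ := fun q => z q.1

section ProdDerivatives

variable {𝕜 : Type*} [NontriviallyNormedField 𝕜]
  {E F G : Type*} [NormedAddCommGroup E] [NormedSpace 𝕜 E] [NormedAddCommGroup F]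
  [NormedSpace 𝕜 F] [NormedAddCommGroup G] [NormedSpace 𝕜 G]

theorem fderiv_comp_fst_apply {g : E → G} {p : E} (hg : DifferentiableAt 𝕜 g p) (t : F)
    (v : E) (s : F) :
    fderiv 𝕜 (fun q : E × F => g q.1) (p, t) (v, s) = fderiv 𝕜 g p v := by
  have hg' : HasFDerivAt (fun q : E × F => g q.1) ((fderiv 𝕜 g p).comp (.fst 𝕜 E F)) (p, t) :=
    hg.hasFDerivAt.comp (p, t) hasFDerivAt_fst
  rw [hg'.fderiv]
  rfl

theorem fderiv_comp_fst_mul_comp_snd_apply {g : E → 𝕜} {h : 𝕜 → 𝕜} {p : E} {t h' : 𝕜}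
    (hg : DifferentiableAt 𝕜 g p) (hh : HasDerivAt h h' t) (v : E) (s : 𝕜) :
    fderiv 𝕜 (fun q : E × 𝕜 => g q.1 * h q.2) (p, t) (v, s) =
      fderiv 𝕜 g p v * h t + g p * (h' * s) := by
  have hg' : HasFDerivAt (fun q : E × 𝕜 => g q.1) ((fderiv 𝕜 g p).comp (.fst 𝕜 E 𝕜)) (p, t) :=
    hg.hasFDerivAt.comp (p, t) hasFDerivAt_fst
  have hh' : HasFDerivAt (fun q : E × 𝕜 => h q.2)
      ((ContinuousLinearMap.toSpanSingleton 𝕜 h').comp (.snd 𝕜 E 𝕜)) (p, t) :=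
    hh.hasFDerivAt.comp (p, t) hasFDerivAt_snd
  rw [(hg'.fun_mul hh').fderiv]
  simp only [add_apply, smul_apply, ContinuousLinearMap.comp_apply, ContinuousLinearMap.coe_fst',
    ContinuousLinearMap.coe_snd', ContinuousLinearMap.toSpanSingleton_apply, smul_eq_mul]
  ring

end ProdDerivatives

section FrontSpinning

variable {E : Type*} [NormedAddCommGroup E] [NormedSpace ℝ E]
  (x y : ℕ → E → ℝ) (p : E) (θ : ℝ) (v : E) (s : ℝ)

theorem spinY_mul_fderiv_spinX_of_two_le {i : ℕ} (hi : 2 ≤ i)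
    (hxi : DifferentiableAt ℝ (x i) p) :
    spinY y i (p, θ) * fderiv ℝ (spinX x i) (p, θ) (v, s) = y i p * fderiv ℝ (x i) p v := by
  obtain ⟨j, rfl⟩ : ∃ j, i = j + 2 := ⟨i - 2, by omega⟩
  exact congrArg (y (j + 2) p * ·) (fderiv_comp_fst_apply hxi θ v s)

theorem spinY_mul_fderiv_spinX_zero_add_one (hx₁ : DifferentiableAt ℝ (x 1) p) :
    spinY y 0 (p, θ) * fderiv ℝ (spinX x 0) (p, θ) (v, s) +
        spinY y 1 (p, θ) * fderiv ℝ (spinX x 1) (p, θ) (v, s) =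
      y 1 p * fderiv ℝ (x 1) p v := by
  change y 1 p * Real.sin θ * fderiv ℝ (fun q : E × ℝ => x 1 q.1 * Real.sin q.2) (p, θ) (v, s) +
      y 1 p * Real.cos θ * fderiv ℝ (fun q : E × ℝ => x 1 q.1 * Real.cos q.2) (p, θ) (v, s) = _
  rw [fderiv_comp_fst_mul_comp_snd_apply hx₁ (Real.hasDerivAt_sin θ),
    fderiv_comp_fst_mul_comp_snd_apply hx₁ (Real.hasDerivAt_cos θ)]
  linear_combination y 1 p * fderiv ℝ (x 1) p v * Real.sin_sq_add_cos_sq θ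

end FrontSpinning

theorem front_spinning_preserves_legendrian_general
    {E : Type*} [NormedAddCommGroup E] [NormedSpace ℝ E]
    (n : ℕ) (hn : 1 ≤ n) (x y : ℕ → E → ℝ) (z : E → ℝ)
    (hx : ∀ i ∈ Finset.Icc 1 n, Differentiable ℝ (x i))
    (hz : Differentiable ℝ z)
    (hleg : ∀ (p : E) (v : E),
      fderiv ℝ z p v = ∑ i ∈ Finset.Icc 1 n, y i p * fderiv ℝ (x i) p v) :
    ∀ (p : E) (θ : ℝ) (v : E) (s : ℝ),
      fderiv ℝ (spinZ z) (p, θ) (v, s) =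
        ∑ i ∈ Finset.Icc 0 n, spinY y i (p, θ) * fderiv ℝ (spinX x i) (p, θ) (v, s) := by
  intro p θ v s
  have hx₁ : DifferentiableAt ℝ (x 1) p := hx 1 (Finset.mem_Icc.mpr ⟨le_rfl, hn⟩) p
  have h_tail : ∀ i ∈ Finset.Ioc 1 n,
      spinY y i (p, θ) * fderiv ℝ (spinX x i) (p, θ) (v, s) = y i p * fderiv ℝ (x i) p v :=
    fun i hi ↦ spinY_mul_fderiv_spinX_of_two_le x y p θ v s (Finset.mem_Ioc.mp hi).1
      (hx i (Finset.Ioc_subset_Icc_self hi) p)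
  unfold spinZ
  rw [fderiv_comp_fst_apply (hz p), hleg, ← Finset.add_sum_Ioc_eq_sum_Icc (Nat.zero_le n),
    ← Finset.Icc_add_one_left_eq_Ioc 0 n, zero_add, ← Finset.add_sum_Ioc_eq_sum_Icc hn,
    ← Finset.add_sum_Ioc_eq_sum_Icc hn, ← add_assoc, Finset.sum_congr rfl h_tail,
    spinY_mul_fderiv_spinX_zero_add_one x y p θ v s hx₁]

/-- **Front spinning preserves the Legendrian condition.**
If `f` has differentiable component functions satisfying
`Dz(p)(v) = Σ_{i=1}^{n} y_i(p)·Dx_i(p)(v)` for all `p, v`, then the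
front-spun map `Σf` satisfies
`DZ(p,θ)(v,s) = Σ_{i=0}^{n} Y_i(p,θ)·DX_i(p,θ)(v,s)` for all `(p,θ)` and
`(v,s)`. -/
theorem front_spinning_preserves_legendrian
    {E : Type*} [NormedAddCommGroup E] [NormedSpace ℝ E]
    (n : ℕ) (hn : 1 ≤ n) (x y : ℕ → E → ℝ) (z : E → ℝ)
    (hx : ∀ i ∈ Finset.Icc 1 n, Differentiable ℝ (x i))
    (hy : ∀ i ∈ Finset.Icc 1 n, Differentiable ℝ (y i))
    (hz : Differentiable ℝ z)
    (hleg : ∀ (p : E) (v : E),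
      fderiv ℝ z p v = ∑ i ∈ Finset.Icc 1 n, y i p * fderiv ℝ (x i) p v) :
    ∀ (p : E) (θ : ℝ) (v : E) (s : ℝ),
      fderiv ℝ (spinZ z) (p, θ) (v, s) =
        ∑ i ∈ Finset.Icc 0 n, spinY y i (p, θ) * fderiv ℝ (spinX x i) (p, θ) (v, s) :=
  front_spinning_preserves_legendrian_general n hn x y z hx hz hleg
end

section
/- Front spinning preserves immersions (from the proof of Proposition 1.4): let n ≥ 1, let E be a real normed vector space, and let f : E → ℝ^{2n+1} have component functions x_1, y_1, …, x_n, y_n, z, each differentiable at p ∈ E. If the derivative Df(p) : E → ℝ^{2n+1} is injective and x_1(p) ≠ 0, then for every θ ∈ ℝ the derivative D(Σf)(p,θ) : E × ℝ → ℝ^{2n+3} of the front-spun map is injective. -/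
/-- The map `f : E → ℝ^{2n+1}` bundled from its component functions
`x_1, …, x_n, y_1, …, y_n, z`. -/
def bundleMap {E : Type*} (n : ℕ) (x y : ℕ → E → ℝ) (z : E → ℝ) :
    E → (Fin n → ℝ) × (Fin n → ℝ) × ℝ :=
  fun p => (fun i => x ((i : ℕ) + 1) p, fun i => y ((i : ℕ) + 1) p, z p)

/-- The front-spun map `Σf : E × ℝ → ℝ^{2n+3}` bundled from its component
functions `X_0, …, X_n, Y_0, …, Y_n, Z`. -/
noncomputable def spinBundleMap {E : Type*} (n : ℕ) (x y : ℕ → E → ℝ) (z : E → ℝ) :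
    E × ℝ → (Fin (n + 1) → ℝ) × (Fin (n + 1) → ℝ) × ℝ :=
  fun q => (fun i => spinX x (i : ℕ) q, fun i => spinY y (i : ℕ) q, spinZ z q)

/-!
On the kernel of `D(Σf)(p,θ)`, the components `X_0, X_1` of `D(Σf)(p,θ)(v,t)` are the rotation
by `θ` of `(Dx_1(p)v, x_1(p)t)`, so both vanish, and `t = 0` since `x_1(p) ≠ 0`. The remaining
components then say exactly that `Df(p)v = 0`, whence `v = 0`.
-/

open ContinuousLinearMap

theorem eq_zero_and_eq_zero_of_rotation {θ a b : ℝ}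
    (h₀ : Real.sin θ * a + Real.cos θ * b = 0) (h₁ : Real.cos θ * a - Real.sin θ * b = 0) :
    a = 0 ∧ b = 0 := by
  have hθ := Real.sin_sq_add_cos_sq θ
  constructor
  · linear_combination Real.sin θ * h₀ + Real.cos θ * h₁ - a * hθ
  · linear_combination Real.cos θ * h₀ - Real.sin θ * h₁ - b * hθ

theorem spinY_eq_spinX {E : Type*} : @spinY E = @spinX E := by
  funext w i
  rcases i with _ | _ | i <;> rfl

section Derivatives

variable {E : Type*} [NormedAddCommGroup E] [NormedSpace ℝ E]

theorem HasFDerivAt.mul_comp_fst_snd {g : E → ℝ} {g' : E →L[ℝ] ℝ} {h : ℝ → ℝ} {h' : ℝ}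
    {p : E} {θ : ℝ} (hg : HasFDerivAt g g' p) (hh : HasDerivAt h h' θ) :
    HasFDerivAt (fun q : E × ℝ => g q.1 * h q.2)
      (h θ • g'.comp (fst ℝ E ℝ) + (g p * h') • snd ℝ E ℝ) (p, θ) := by
  have hg₁ : HasFDerivAt (fun q : E × ℝ => g q.1) (g'.comp (fst ℝ E ℝ)) (p, θ) :=
    hg.comp (p, θ) hasFDerivAt_fst
  have hh₂ : HasFDerivAt (fun q : E × ℝ => h q.2) (h' • snd ℝ E ℝ) (p, θ) :=
    hh.comp_hasFDerivAt (p, θ) hasFDerivAt_snd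
  refine (hg₁.mul hh₂).congr_fderiv ?_
  rw [smul_smul, add_comm]

theorem fderiv_pi_prod_apply {ι : Type*} [Fintype ι] {X : Type*} [NormedAddCommGroup X]
    [NormedSpace ℝ X] {a b : ι → X → ℝ} {c : X → ℝ} {q : X}
    (ha : ∀ i, DifferentiableAt ℝ (a i) q) (hb : ∀ i, DifferentiableAt ℝ (b i) q)
    (hc : DifferentiableAt ℝ c q) (u : X) :
    fderiv ℝ (fun q => (fun i => a i q, fun i => b i q, c q)) q u =
      (fun i => fderiv ℝ (a i) q u, fun i => fderiv ℝ (b i) q u, fderiv ℝ c q u) := by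
  have hF := (hasFDerivAt_pi.2 fun i => (ha i).hasFDerivAt).prodMk
    ((hasFDerivAt_pi.2 fun i => (hb i).hasFDerivAt).prodMk hc.hasFDerivAt)
  simp [hF.fderiv]

variable {w : ℕ → E → ℝ} {p : E} {θ : ℝ}

theorem fderiv_spinX_zero_apply (hw : DifferentiableAt ℝ (w 1) p) (v : E) (t : ℝ) :
    fderiv ℝ (spinX w 0) (p, θ) (v, t) =
      Real.sin θ * fderiv ℝ (w 1) p v + Real.cos θ * (w 1 p * t) := by
  have hd : HasFDerivAt (spinX w 0) _ (p, θ) :=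
    hw.hasFDerivAt.mul_comp_fst_snd (Real.hasDerivAt_sin θ)
  rw [hd.fderiv]
  simp only [add_apply, smul_apply, comp_apply, coe_fst', coe_snd', smul_eq_mul]
  ring

theorem fderiv_spinX_one_apply (hw : DifferentiableAt ℝ (w 1) p) (v : E) (t : ℝ) :
    fderiv ℝ (spinX w 1) (p, θ) (v, t) =
      Real.cos θ * fderiv ℝ (w 1) p v - Real.sin θ * (w 1 p * t) := by
  have hd : HasFDerivAt (spinX w 1) _ (p, θ) :=
    hw.hasFDerivAt.mul_comp_fst_snd (Real.hasDerivAt_cos θ)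
  rw [hd.fderiv]
  simp only [add_apply, smul_apply, comp_apply, coe_fst', coe_snd', smul_eq_mul]
  ring

theorem hasFDerivAt_spinX_add_two {i : ℕ} (hw : DifferentiableAt ℝ (w (i + 2)) p) :
    HasFDerivAt (spinX w (i + 2)) ((fderiv ℝ (w (i + 2)) p).comp (fst ℝ E ℝ)) (p, θ) :=
  hw.hasFDerivAt.comp (p, θ) hasFDerivAt_fst

theorem hasFDerivAt_spinZ {z : E → ℝ} (hz : DifferentiableAt ℝ z p) :
    HasFDerivAt (spinZ z) ((fderiv ℝ z p).comp (fst ℝ E ℝ)) (p, θ) :=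
  hz.hasFDerivAt.comp (p, θ) hasFDerivAt_fst

theorem differentiableAt_spinX {n i : ℕ} (hw : ∀ i ∈ Finset.Icc 1 n, DifferentiableAt ℝ (w i) p)
    (h1n : 1 ≤ n) (hi : i ≤ n) : DifferentiableAt ℝ (spinX w i) (p, θ) := by
  have hw1 := hw 1 (Finset.mem_Icc.2 ⟨le_rfl, h1n⟩)
  match i, hi with
  | 0, _ => exact (hw1.hasFDerivAt.mul_comp_fst_snd (Real.hasDerivAt_sin θ)).differentiableAt
  | 1, _ => exact (hw1.hasFDerivAt.mul_comp_fst_snd (Real.hasDerivAt_cos θ)).differentiableAt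
  | i + 2, hi =>
    exact (hasFDerivAt_spinX_add_two (hw _ (Finset.mem_Icc.2 ⟨by omega, hi⟩))).differentiableAt

theorem fderiv_apply_eq_zero_of_fderiv_spinX_apply_eq_zero {n : ℕ}
    (hw : ∀ i ∈ Finset.Icc 1 n, DifferentiableAt ℝ (w i) p) (h1n : 1 ≤ n) {v : E} {t : ℝ}
    (h : ∀ i : Fin (n + 1), fderiv ℝ (spinX w i) (p, θ) (v, t) = 0) :
    (∀ i : Fin n, fderiv ℝ (w (i + 1)) p v = 0) ∧ w 1 p * t = 0 := by
  have hw1 := hw 1 (Finset.mem_Icc.2 ⟨le_rfl, h1n⟩)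
  obtain ⟨hd1, hwt⟩ := eq_zero_and_eq_zero_of_rotation
    ((fderiv_spinX_zero_apply hw1 v t).symm.trans (h ⟨0, by omega⟩))
    ((fderiv_spinX_one_apply hw1 v t).symm.trans (h ⟨1, by omega⟩))
  refine ⟨fun ⟨i, hi⟩ => ?_, hwt⟩
  rcases i with _ | k
  · exact hd1
  · have hk := h ⟨k + 2, by omega⟩
    rwa [(hasFDerivAt_spinX_add_two (hw _ (Finset.mem_Icc.2 ⟨by omega, hi⟩))).fderiv] at hk

end Derivatives

section Bundled

variable {E : Type*} [NormedAddCommGroup E] [NormedSpace ℝ E] {n : ℕ} {x y : ℕ → E → ℝ}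
  {z : E → ℝ} {p : E}

theorem fderiv_bundleMap_apply (hx : ∀ i ∈ Finset.Icc 1 n, DifferentiableAt ℝ (x i) p)
    (hy : ∀ i ∈ Finset.Icc 1 n, DifferentiableAt ℝ (y i) p) (hz : DifferentiableAt ℝ z p)
    (v : E) :
    fderiv ℝ (bundleMap n x y z) p v =
      (fun i : Fin n => fderiv ℝ (x (i + 1)) p v, fun i : Fin n => fderiv ℝ (y (i + 1)) p v,
        fderiv ℝ z p v) :=
  fderiv_pi_prod_apply (fun i => hx _ (Finset.mem_Icc.2 ⟨by omega, i.2⟩))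
    (fun i => hy _ (Finset.mem_Icc.2 ⟨by omega, i.2⟩)) hz v

theorem fderiv_spinBundleMap_apply (hn : 1 ≤ n)
    (hx : ∀ i ∈ Finset.Icc 1 n, DifferentiableAt ℝ (x i) p)
    (hy : ∀ i ∈ Finset.Icc 1 n, DifferentiableAt ℝ (y i) p) (hz : DifferentiableAt ℝ z p)
    (θ : ℝ) (v : E) (t : ℝ) :
    fderiv ℝ (spinBundleMap n x y z) (p, θ) (v, t) =
      (fun i : Fin (n + 1) => fderiv ℝ (spinX x i) (p, θ) (v, t),
        fun i : Fin (n + 1) => fderiv ℝ (spinX y i) (p, θ) (v, t), fderiv ℝ z p v) := by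
  have hzθ := hasFDerivAt_spinZ (θ := θ) hz
  unfold spinBundleMap
  rw [spinY_eq_spinX, fderiv_pi_prod_apply
    (fun i => differentiableAt_spinX hx hn (Nat.lt_succ_iff.1 i.2))
    (fun i => differentiableAt_spinX hy hn (Nat.lt_succ_iff.1 i.2)) hzθ.differentiableAt,
    hzθ.fderiv]
  rfl

end Bundled

/-- **Front spinning preserves immersions.**
If the component functions of `f` are differentiable at `p`, the derivative
`Df(p) : E → ℝ^{2n+1}` is injective and `x_1(p) ≠ 0`, then for every `θ` the
derivative `D(Σf)(p,θ) : E × ℝ → ℝ^{2n+3}` is injective. -/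
theorem front_spinning_preserves_immersion
    {E : Type*} [NormedAddCommGroup E] [NormedSpace ℝ E]
    (n : ℕ) (hn : 1 ≤ n) (x y : ℕ → E → ℝ) (z : E → ℝ) (p : E)
    (hx : ∀ i ∈ Finset.Icc 1 n, DifferentiableAt ℝ (x i) p)
    (hy : ∀ i ∈ Finset.Icc 1 n, DifferentiableAt ℝ (y i) p)
    (hz : DifferentiableAt ℝ z p)
    (hinj : Function.Injective (fderiv ℝ (bundleMap n x y z) p))
    (hx1 : x 1 p ≠ 0) :
    ∀ θ : ℝ, Function.Injective (fderiv ℝ (spinBundleMap n x y z) (p, θ)) := by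
  intro θ
  refine (injective_iff_map_eq_zero _).2 fun ⟨v, t⟩ hvt => ?_
  rw [fderiv_spinBundleMap_apply hn hx hy hz] at hvt
  simp only [Prod.mk_eq_zero, funext_iff, Pi.zero_apply] at hvt
  obtain ⟨hX, hY, hZ⟩ := hvt
  obtain ⟨hdx, hxt⟩ := fderiv_apply_eq_zero_of_fderiv_spinX_apply_eq_zero hx hn hX
  obtain ⟨hdy, -⟩ := fderiv_apply_eq_zero_of_fderiv_spinX_apply_eq_zero hy hn hY
  have ht : t = 0 := (mul_eq_zero.1 hxt).resolve_left hx1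
  have hv : fderiv ℝ (bundleMap n x y z) p v = 0 := by
    rw [fderiv_bundleMap_apply hx hy hz]
    exact Prod.ext (funext hdx) (Prod.ext (funext hdy) hZ)
  exact Prod.ext (hinj (hv.trans (map_zero _).symm)) ht
end
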